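/- Let f ∈ PL⁺(S¹) with rotation number 0 that is reversed by some h ∈ PL⁻(S¹) (i.e. hfh⁻¹ = f⁻¹). Then f is strongly reversible in PL(S¹) by an orientation-reversing involution. -/

import Mathlib

open Set Real Filter

/-- A function `ℝ → ℝ` is piecewise linear: its set of break points is locally
finite, and off the break points the function is locally affine. -/
def IsPLFun (f : ℝ → ℝ) : Prop :=
  ∃ B : Set ℝ, (∀ r : ℝ, (B ∩ Set.Icc (-r) r).Finite) ∧
    ∀ x ∉ B, ∃ a b : ℝ, ∀ᶠ y in nhds x, f y = a * y + b

/-- `F : ℝ → ℝ` is a lift of the circle map `f` with degree `k`. -/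
def IsLift (f : Circle → Circle) (F : ℝ → ℝ) (k : ℝ) : Prop :=
  (∀ x : ℝ, f (Circle.exp (2 * π * x)) = Circle.exp (2 * π * F x)) ∧
    ∀ x : ℝ, F (x + 1) = F x + k

/-- orientation-preserving piecewise linear homeomorphism of the circle -/
def PLplus (f : Circle ≃ₜ Circle) : Prop :=
  ∃ F : ℝ → ℝ, StrictMono F ∧ IsPLFun F ∧ IsLift f F 1

/-- orientation-reversing piecewise linear homeomorphism of the circle -/
def PLminus (f : Circle ≃ₜ Circle) : Prop :=
  ∃ F : ℝ → ℝ, StrictAnti F ∧ IsPLFun F ∧ IsLift f F (-1)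

/-- piecewise linear homeomorphism of the circle -/
def PLcirc (f : Circle ≃ₜ Circle) : Prop := PLplus f ∨ PLminus f

/-!
Lift `f` to an increasing `F : ℝ ≃o ℝ` with `F (x + 1) = F x + 1` and a fixed point, and `h` to a
decreasing `H` with `H (x + 1) = H x - 1`; the reversal then lifts to `F ∘ H ∘ F = H` on the nose.
`H` has a fixed point `P` and a point `Q` with `H Q = Q - 1`, where `P ≤ Q ≤ P + 1`. The lift of
the involution is `T = H` on the bands `[P + n, Q + n]` and `T = H⁻¹` on the gaps between them:
`H` exchanges bands and gaps, so `T` is a decreasing piecewise linear involution.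

`T` reverses `F` wherever `x` and `F x` lie both in bands or both in gaps. Otherwise a band end `c`
lies between `x` and `F x`, and `c` is fixed by `G = H ∘ H`, which commutes with `F`. The
`F`-orbits of `c` and of `x` increase (or decrease) to the same fixed point of `F`; since `G` is
affine on one side of that point and fixes infinitely many points of the orbit of `c`, it is the
identity there, hence fixes `x`. Then `H x = H⁻¹ x` (and likewise at `F x`), so `T` agrees with `H`
at both points and `F (T (F x)) = T x` follows from `F ∘ H ∘ F = H`.
-/

open Function Topology

theorem Circle.exp_two_pi_mul_eq_iff {a b : ℝ} :
    Circle.exp (2 * π * a) = Circle.exp (2 * π * b) ↔ ∃ n : ℤ, a = b + n := by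
  simp only [Circle.exp_eq_exp]
  refine exists_congr fun n => ⟨fun h => ?_, fun h => by rw [h]; ring⟩
  have : 2 * π * a = 2 * π * (b + n) := by rw [h]; ring
  exact mul_left_cancel₀ Real.two_pi_pos.ne' this

theorem Circle.surjective_exp_two_pi_mul : Surjective fun x : ℝ => Circle.exp (2 * π * x) :=
  Circle.exp_surjective.comp (mul_left_surjective₀ Real.two_pi_pos.ne')

theorem Circle.isQuotientMap_exp_two_pi_mul : IsQuotientMap fun x : ℝ => Circle.exp (2 * π * x) :=
  (Circle.isCoveringMap_exp.isQuotientMap Circle.exp_surjective).comp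
    (Homeomorph.mulLeft₀ (2 * π) Real.two_pi_pos.ne').isQuotientMap

theorem exists_int_forall_eq_add_of_exp_eq {F G : ℝ → ℝ} (hF : Continuous F) (hG : Continuous G)
    (h : ∀ x, Circle.exp (2 * π * F x) = Circle.exp (2 * π * G x)) :
    ∃ m : ℤ, ∀ x, F x = G x + m := by
  have hZ : MapsTo (fun x => F x - G x) univ (AddSubgroup.zmultiples (1 : ℝ)) := by
    intro x _
    obtain ⟨n, hn⟩ := Circle.exp_two_pi_mul_eq_iff.1 (h x)
    exact ⟨n, by simp [hn]⟩
  obtain ⟨m, hm⟩ := hZ (mem_univ 0)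
  refine ⟨m, fun x => ?_⟩
  have := isPreconnected_univ.constant_of_mapsTo
    (isDiscrete_iff_discreteTopology.2
      (inferInstanceAs (DiscreteTopology (AddSubgroup.zmultiples (1 : ℝ)))))
    (hF.sub hG).continuousOn hZ (mem_univ x) (mem_univ 0)
  simp only [zsmul_eq_mul, mul_one] at hm
  simp only [Pi.sub_apply] at this
  linarith

theorem map_add_int_of_map_add_one {g : ℝ → ℝ} {k : ℝ} (h : ∀ x, g (x + 1) = g x + k)
    (x : ℝ) (n : ℤ) : g (x + n) = g x + n * k := by
  have hper : Periodic (fun x => g x - k * x) 1 := fun x => by simp only [h]; ring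
  have := hper.int_mul n x
  simp only [mul_one] at this
  linarith

theorem Antitone.continuous_of_surjective {α β : Type*} [LinearOrder α] [TopologicalSpace α]
    [OrderTopology α] [LinearOrder β] [TopologicalSpace β] [OrderTopology β] [DenselyOrdered β]
    {f : α → β} (hf : Antitone f) (hs : Surjective f) : Continuous f :=
  continuous_ofDual.comp
    (hf.dual_right.continuous_of_surjective (OrderDual.toDual.surjective.comp hs))

theorem StrictAnti.equiv_symm {α β : Type*} [LinearOrder α] [LinearOrder β] {e : α ≃ β}
    (he : StrictAnti e) : StrictAnti e.symm :=
  fun a b hab => he.lt_iff_gt.1 (by simpa using hab)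

theorem StrictAnti.exists_homeomorph_coe_eq {H : ℝ → ℝ} (hH : StrictAnti H) (hs : Surjective H) :
    ∃ e : ℝ ≃ₜ ℝ, ⇑e = H := by
  let e := Equiv.ofBijective H ⟨hH.injective, hs⟩
  have he : StrictAnti e.symm := StrictAnti.equiv_symm (e := e) hH
  exact ⟨⟨e, hH.antitone.continuous_of_surjective hs,
    he.antitone.continuous_of_surjective e.symm.surjective⟩, rfl⟩

namespace IsLift

variable {f : Circle → Circle} {F : ℝ → ℝ} {k : ℝ}

theorem map_add_int (hF : IsLift f F k) (x : ℝ) (n : ℤ) : F (x + n) = F x + n * k :=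
  map_add_int_of_map_add_one hF.2 x n

theorem sub_int (hF : IsLift f F k) (m : ℤ) : IsLift f (fun x => F x - m) k :=
  ⟨fun x => (hF.1 x).trans (Circle.exp_two_pi_mul_eq_iff.2 ⟨m, by ring⟩),
    fun x => by simp only [hF.2]; ring⟩

theorem surjective (hF : IsLift f F k) (hf : Surjective f) (hk : k = 1 ∨ k = -1) :
    Surjective F := by
  intro c
  obtain ⟨w, hw⟩ := hf (Circle.exp (2 * π * c))
  obtain ⟨y, rfl⟩ := Circle.surjective_exp_two_pi_mul w
  obtain ⟨n, hn⟩ := Circle.exp_two_pi_mul_eq_iff.1 ((hF.1 y).symm.trans hw)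
  rcases hk with rfl | rfl
  · exact ⟨y + (-n : ℤ), by rw [hF.map_add_int, hn]; push_cast; ring⟩
  · exact ⟨y + n, by rw [hF.map_add_int, hn]; ring⟩

theorem exists_apply_eq_add_int (hF : IsLift f F k) {z : Circle} (hz : f z = z) :
    ∃ x₀ : ℝ, ∃ m : ℤ, F x₀ = x₀ + m := by
  obtain ⟨x₀, rfl⟩ := Circle.surjective_exp_two_pi_mul z
  exact ⟨x₀, Circle.exp_two_pi_mul_eq_iff.1 ((hF.1 x₀).symm.trans hz)⟩

end IsLift

theorem abs_apply_sub_self_lt_one {F : ℝ → ℝ} (hF : StrictMono F)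
    (hper : ∀ x, F (x + 1) = F x + 1) {x₀ : ℝ} (hx₀ : F x₀ = x₀) (y : ℝ) : |F y - y| < 1 := by
  set s := x₀ + ⌊y - x₀⌋
  have hs : F s = s := by rw [map_add_int_of_map_add_one hper, hx₀, mul_one]
  have h₁ : s ≤ y := by linarith [Int.floor_le (y - x₀)]
  have h₂ : y < s + 1 := by linarith [Int.lt_floor_add_one (y - x₀)]
  have h₃ := hF.monotone h₁
  have h₄ := hF h₂
  rw [hper, hs] at h₄
  rw [hs] at h₃
  rw [abs_sub_lt_iff]
  constructor <;> linarith

theorem PLplus.exists_orderIso_isLift {f : Circle ≃ₜ Circle} (hf : PLplus f)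
    (hfix : ∃ z, f z = z) : ∃ F : ℝ ≃o ℝ, IsLift f F 1 ∧ ∃ x₀, F x₀ = x₀ := by
  obtain ⟨F, hFm, -, hF⟩ := hf
  obtain ⟨z, hz⟩ := hfix
  obtain ⟨x₀, m, hx₀⟩ := hF.exists_apply_eq_add_int hz
  have hF' := hF.sub_int m
  have hm : StrictMono fun x => F x - m := fun a b hab => sub_lt_sub_right (hFm hab) _
  refine ⟨hm.orderIsoOfSurjective _ (hF'.surjective f.surjective (Or.inl rfl)), hF', x₀, ?_⟩
  simp [hx₀]

theorem PLminus.exists_homeomorph_isLift {h : Circle ≃ₜ Circle} (hh : PLminus h) :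
    ∃ H : ℝ ≃ₜ ℝ, StrictAnti H ∧ IsPLFun H ∧ IsLift h H (-1) := by
  obtain ⟨H, hHa, hHPL, hH⟩ := hh
  obtain ⟨e, rfl⟩ := hHa.exists_homeomorph_coe_eq (hH.surjective h.surjective (Or.inr rfl))
  exact ⟨e, hHa, hHPL, hH⟩

theorem IsLift.reverses_of_reverses {f h : Circle → Circle} {F H : ℝ → ℝ} (hF : IsLift f F 1)
    (hFm : StrictMono F) (hFc : Continuous F) (hH : IsLift h H (-1)) (hHc : Continuous H)
    (hrev : ∀ z, f (h (f z)) = h z) {x₀ : ℝ} (hx₀ : F x₀ = x₀) (x : ℝ) :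
    F (H (F x)) = H x := by
  obtain ⟨m, hm⟩ := exists_int_forall_eq_add_of_exp_eq (hFc.comp (hHc.comp hFc)) hHc
    fun x => by rw [comp_apply, comp_apply, ← hF.1, ← hH.1, ← hF.1, ← hH.1, hrev]
  -- at `x₀` the constant `m` is `F y - y` for `y = H x₀`, and `|F y - y| < 1`
  have hlt := abs_apply_sub_self_lt_one hFm (fun x => by rw [hF.2]) hx₀ (H x₀)
  have hm₀ := hm x₀
  simp only [comp_apply, hx₀] at hm₀
  rw [hm₀, add_sub_cancel_left, ← Int.cast_abs, ← Int.cast_one, Int.cast_lt,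
    Int.abs_lt_one_iff] at hlt
  simpa [hlt] using hm x

theorem exists_homeomorph_involutive_isLift {T : ℝ → ℝ} (hT : StrictAnti T)
    (hTinv : Involutive T) (hper : ∀ x, T (x + 1) = T x - 1) :
    ∃ τ : Circle ≃ₜ Circle, Involutive τ ∧ IsLift τ T (-1) := by
  have hp := Circle.surjective_exp_two_pi_mul
  have hper' : ∀ x, T (x + 1) = T x + -1 := fun x => by rw [hper]; ring
  let τ : Circle → Circle := fun z => Circle.exp (2 * π * T (surjInv hp z))
  have hτ : ∀ x, τ (Circle.exp (2 * π * x)) = Circle.exp (2 * π * T x) := fun x => by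
    obtain ⟨n, hn⟩ := Circle.exp_two_pi_mul_eq_iff.1 (surjInv_eq hp (Circle.exp (2 * π * x)))
    refine Circle.exp_two_pi_mul_eq_iff.2 ⟨-n, ?_⟩
    rw [hn, map_add_int_of_map_add_one hper']
    push_cast; ring
  have hτc : Continuous τ := by
    rw [Circle.isQuotientMap_exp_two_pi_mul.continuous_iff, show τ ∘ _ = _ from funext hτ]
    exact (Circle.exp.continuous.comp (continuous_const.mul continuous_id)).comp
      (hT.antitone.continuous_of_surjective hTinv.surjective)
  have hτinv : Involutive τ := fun z => by
    obtain ⟨x, rfl⟩ := hp z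
    show τ (τ (Circle.exp (2 * π * x))) = Circle.exp (2 * π * x)
    rw [hτ x, hτ (T x), hTinv]
  exact ⟨⟨hτinv.toPerm τ, hτc, hτc⟩, hτinv, hτ, hper'⟩

def IsLocallyFiniteSet (B : Set ℝ) : Prop := ∀ r : ℝ, (B ∩ Icc (-r) r).Finite

namespace IsLocallyFiniteSet

variable {B C : Set ℝ}

theorem finite_inter_of_isBounded (hB : IsLocallyFiniteSet B) {s : Set ℝ}
    (hs : Bornology.IsBounded s) : (B ∩ s).Finite := by
  obtain ⟨r, hr⟩ := hs.subset_closedBall 0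
  refine (hB r).subset (inter_subset_inter_right B (hr.trans ?_))
  simp [Real.closedBall_eq_Icc]

theorem union (hB : IsLocallyFiniteSet B) (hC : IsLocallyFiniteSet C) :
    IsLocallyFiniteSet (B ∪ C) := fun r => by
  rw [union_inter_distrib_right]
  exact (hB r).union (hC r)

theorem preimage (hB : IsLocallyFiniteSet B) {g : ℝ → ℝ} (hg : Continuous g)
    (hg' : Injective g) : IsLocallyFiniteSet (g ⁻¹' B) := fun r => by
  have hfin := hB.finite_inter_of_isBounded ((isCompact_Icc (a := -r) (b := r)).image hg).isBounded
  exact (hfin.preimage hg'.injOn).subset fun x hx => ⟨hx.1, mem_image_of_mem g hx.2⟩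

theorem eventually_nhdsNE_notMem (hB : IsLocallyFiniteSet B) (w : ℝ) :
    ∀ᶠ y in 𝓝[≠] w, y ∉ B := by
  have hfin := (hB.finite_inter_of_isBounded (Metric.isBounded_Icc (w - 1) (w + 1))).inter_of_left
    ({w}ᶜ)
  have hS : (B ∩ Icc (w - 1) (w + 1) ∩ {w}ᶜ)ᶜ ∈ 𝓝 w :=
    hfin.isClosed.isOpen_compl.mem_nhds (by simp)
  have hI : Icc (w - 1) (w + 1) ∈ 𝓝 w := Icc_mem_nhds (by linarith) (by linarith)
  filter_upwards [nhdsWithin_le_nhds hS, nhdsWithin_le_nhds hI, self_mem_nhdsWithin]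
    with y hyS hyI hyw hyB
  exact hyS ⟨⟨hyB, hyI⟩, hyw⟩

end IsLocallyFiniteSet

theorem isLocallyFiniteSet_range_add_intCast (P : ℝ) :
    IsLocallyFiniteSet (range fun n : ℤ => P + n) := fun r => by
  rw [← image_preimage_eq_range_inter]
  refine ((finite_Icc ⌈-r - P⌉ ⌊r - P⌋).subset fun n hn => ?_).image _
  simp only [mem_preimage, mem_Icc] at hn
  exact ⟨Int.ceil_le.2 (by linarith), Int.le_floor.2 (by linarith)⟩

theorem exists_affine_of_eventually_affine {f : ℝ → ℝ} {U : Set ℝ} (hU : IsOpen U)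
    (hU' : IsPreconnected U) (h : ∀ x ∈ U, ∃ a b : ℝ, ∀ᶠ y in 𝓝 x, f y = a * y + b) :
    ∃ a b : ℝ, ∀ x ∈ U, f x = a * x + b := by
  rcases U.eq_empty_or_nonempty with rfl | ⟨x₀, hx₀⟩
  · exact ⟨0, 0, by simp⟩
  -- the slope and intercept of the germ of `f` at `x`
  let Λ : ℝ → ℝ × ℝ := fun x => (deriv f x, f x - deriv f x * x)
  have hΛ : ∀ x ∈ U, ∃ a b : ℝ, ∀ᶠ y in 𝓝 x, Λ y = (a, b) := by
    intro x hx
    obtain ⟨a, b, hab⟩ := h x hx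
    refine ⟨a, b, ?_⟩
    filter_upwards [hab.eventually_nhds] with y hy
    have hd : deriv f y = a := by
      rw [Filter.EventuallyEq.deriv_eq hy]
      exact ((hasDerivAt_id y).const_mul a |>.add_const b).deriv.trans (mul_one a)
    simp only [Λ, hd, Filter.Eventually.self_of_nhds hy]
    ring_nf
  have hconst : ∀ x ∈ U, Λ x = Λ x₀ := fun x hx =>
    hU'.induction₂ (fun x y => Λ x = Λ y) (fun x hx => by
        obtain ⟨a, b, hab⟩ := hΛ x hx
        rw [hU.nhdsWithin_eq hx]
        filter_upwards [hab] with y hy using hab.self_of_nhds.trans hy.symm)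
      (fun _ _ _ _ _ _ => Eq.trans) (fun _ _ _ _ => Eq.symm) hx hx₀
  refine ⟨(Λ x₀).1, (Λ x₀).2, fun x hx => ?_⟩
  rw [← hconst x hx]
  simp only [Λ]
  ring

namespace IsPLFun

variable {f g : ℝ → ℝ}

theorem exists_affine_Ioo_left (hf : IsPLFun f) (w : ℝ) :
    ∃ l < w, ∃ a b : ℝ, ∀ y ∈ Ioo l w, f y = a * y + b := by
  obtain ⟨B, hB : IsLocallyFiniteSet B, hfB⟩ := hf
  obtain ⟨l, hl, hlB⟩ := mem_nhdsLT_iff_exists_Ioo_subset.1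
    (nhdsWithin_mono w (fun y hy => ne_of_lt hy) (hB.eventually_nhdsNE_notMem w))
  exact ⟨l, hl, exists_affine_of_eventually_affine isOpen_Ioo isPreconnected_Ioo
    fun y hy => hfB y (hlB hy)⟩

theorem comp (hf : IsPLFun f) (hg : IsPLFun g) (hgc : Continuous g) (hg' : Injective g) :
    IsPLFun (f ∘ g) := by
  obtain ⟨B, hB : IsLocallyFiniteSet B, hfB⟩ := hf
  obtain ⟨C, hC : IsLocallyFiniteSet C, hgC⟩ := hg
  refine ⟨C ∪ g ⁻¹' B, hC.union (hB.preimage hgc hg'), fun x hx => ?_⟩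
  obtain ⟨a, b, hab⟩ := hgC x fun h => hx (Or.inl h)
  obtain ⟨a', b', hab'⟩ := hfB (g x) fun h => hx (Or.inr h)
  refine ⟨a' * a, a' * b + b', ?_⟩
  filter_upwards [hab, (hgc.tendsto x).eventually hab'] with y hy hy'
  rw [comp_apply, hy', hy]
  ring

theorem symm {H : ℝ ≃ₜ ℝ} (hH : IsPLFun H) : IsPLFun H.symm := by
  obtain ⟨B, hB : IsLocallyFiniteSet B, hHB⟩ := hH
  refine ⟨H.symm ⁻¹' B, hB.preimage H.symm.continuous H.symm.injective, fun x hx => ?_⟩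
  obtain ⟨a, b, hab⟩ := hHB (H.symm x) hx
  have hev : ∀ᶠ z in 𝓝 x, z = a * H.symm z + b := by
    filter_upwards [(H.symm.continuous.tendsto x).eventually hab] with z hz
    simpa using hz
  have ha : a ≠ 0 := by
    rintro rfl
    obtain ⟨z, hz, hzx⟩ :=
      ((hev.filter_mono nhdsWithin_le_nhds).and (self_mem_nhdsWithin (s := {x}ᶜ))).exists
    have hx₀ := hev.self_of_nhds
    simp only [zero_mul, zero_add] at hz hx₀
    exact hzx (hz.trans hx₀.symm)
  exact ⟨a⁻¹, -b / a, hev.mono fun z hz => by field_simp; linarith⟩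

theorem of_eventuallyEq_or (hf : IsPLFun f) (hg : IsPLFun g) {S : Set ℝ}
    (hS : IsLocallyFiniteSet S) {T : ℝ → ℝ} (hT : ∀ x ∉ S, T =ᶠ[𝓝 x] f ∨ T =ᶠ[𝓝 x] g) :
    IsPLFun T := by
  obtain ⟨B, hB : IsLocallyFiniteSet B, hfB⟩ := hf
  obtain ⟨C, hC : IsLocallyFiniteSet C, hgC⟩ := hg
  refine ⟨S ∪ B ∪ C, (hS.union hB).union hC, fun x hx => ?_⟩
  rcases hT x fun h => hx (Or.inl (Or.inl h)) with hTf | hTg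
  · obtain ⟨a, b, hab⟩ := hfB x fun h => hx (Or.inl (Or.inr h))
    exact ⟨a, b, hTf.trans hab⟩
  · obtain ⟨a, b, hab⟩ := hgC x fun h => hx (Or.inr h)
    exact ⟨a, b, hTg.trans hab⟩

end IsPLFun

theorem eq_one_and_eq_zero_of_affine_fixes {a b p q : ℝ} (hpq : p ≠ q) (hp : a * p + b = p)
    (hq : a * q + b = q) : a = 1 ∧ b = 0 := by
  have ha : a = 1 := by
    have : (a - 1) * (p - q) = 0 := by linarith
    simpa [sub_eq_zero, hpq] using this
  exact ⟨ha, by subst ha; linarith⟩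

section Rigidity

variable {G : ℝ → ℝ}

theorem StrictMono.tendsto_iterate_nhdsLT_iSup {F : ℝ → ℝ} (hF : StrictMono F) {x s : ℝ}
    (hx : x < F x) (hxs : x ≤ s) (hs : F s = s) :
    Tendsto (fun n => F^[n] x) atTop (𝓝[<] ⨆ n, F^[n] x) := by
  have hmono := hF.strictMono_iterate_of_lt_map hx
  have hbdd : BddAbove (range fun n => F^[n] x) := ⟨s, by
    rintro _ ⟨n, rfl⟩
    simpa [iterate_fixed hs] using hF.monotone.iterate n hxs⟩
  refine tendsto_nhdsWithin_iff.2 ⟨tendsto_atTop_ciSup hmono.monotone hbdd,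
    Eventually.of_forall fun n => ?_⟩
  exact (hmono n.lt_succ_self).trans_le (le_ciSup hbdd (n + 1))

theorem apply_eq_self_of_mem_Icc {F : ℝ → ℝ} (hF : StrictMono F)
    (hG : ∀ w, ∃ l < w, ∃ a b : ℝ, ∀ y ∈ Ioo l w, G y = a * y + b) (hFG : Function.Commute F G)
    {x c s : ℝ} (hx : x < F x) (hxs : x ≤ s) (hs : F s = s) (hc : c ∈ Icc x (F x))
    (hGc : G c = c) : G x = x := by
  set L := ⨆ n, F^[n] x
  obtain ⟨l, hl, a, b, hab⟩ := hG L
  obtain ⟨N, hN⟩ := eventually_atTop.1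
    ((hF.tendsto_iterate_nhdsLT_iSup hx hxs hs).eventually (Ioo_mem_nhdsLT hl))
  -- the orbit of `c` is squeezed between consecutive points of the orbit of `x`
  have hcN : ∀ n ≥ N, F^[n] c ∈ Ioo l L := fun n hn => by
    have h₁ := hF.monotone.iterate n hc.1
    have h₂ := hF.monotone.iterate n hc.2
    rw [← iterate_succ_apply] at h₂
    exact ⟨(hN n hn).1.trans_le h₁, h₂.trans_lt (hN (n + 1) (by omega)).2⟩
  have hGorbit : ∀ n, G (F^[n] c) = F^[n] c := fun n => by
    rw [← (hFG.iterate_left n).eq, hGc]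
  have hcF : c ≠ F c := fun h => by
    have hFx : F x = c := le_antisymm (h ▸ hF.monotone hc.1) hc.2
    exact hx.ne (hF.injective (by rw [hFx, ← h])).symm
  have hne : F^[N] c ≠ F^[N + 1] c := by
    rw [iterate_succ_apply]
    exact (hF.injective.iterate N).ne hcF
  obtain ⟨rfl, rfl⟩ := eq_one_and_eq_zero_of_affine_fixes hne
    ((hab _ (hcN N le_rfl)).symm.trans (hGorbit N))
    ((hab _ (hcN (N + 1) (by omega))).symm.trans (hGorbit (N + 1)))
  have hGxN : G (F^[N] x) = F^[N] x := by rw [hab _ (hN N le_rfl)]; ring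
  rw [← (hFG.iterate_left N).eq] at hGxN
  exact hF.injective.iterate N hGxN

theorem apply_eq_self_of_mem_uIcc (F : ℝ ≃o ℝ) (hfix : ∀ y, ∃ s, y ≤ s ∧ F s = s)
    (hG : ∀ w, ∃ l < w, ∃ a b : ℝ, ∀ y ∈ Ioo l w, G y = a * y + b) (hFG : Function.Commute F G)
    {x c : ℝ} (hc : c ∈ uIcc x (F x)) (hGc : G c = c) : G x = x := by
  rcases lt_trichotomy x (F x) with hlt | heq | hgt
  · obtain ⟨s, hxs, hs⟩ := hfix x
    exact apply_eq_self_of_mem_Icc F.strictMono hG hFG hlt hxs hs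
      (by rwa [uIcc_of_le hlt.le] at hc) hGc
  · rw [← heq, uIcc_self, mem_singleton_iff] at hc
    rwa [← hc]
  · -- apply the first case to `F⁻¹` at the point `F x`
    obtain ⟨s, hxs, hs⟩ := hfix (F x)
    have hFGsymm : Function.Commute F.symm G :=
      hFG.inverse_left F.symm_apply_apply F.apply_symm_apply
    have hGFx : G (F x) = F x := apply_eq_self_of_mem_Icc F.symm.strictMono hG hFGsymm
      (by simpa using hgt) hxs (F.symm_apply_eq.2 hs.symm)
      (by rwa [F.symm_apply_apply, ← uIcc_of_ge hgt.le]) hGc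
    rw [← hFG.eq] at hGFx
    exact F.injective hGFx

end Rigidity

theorem StrictAntiOn.strictAnti_of_map_add_one {g : ℝ → ℝ} {a : ℝ}
    (h : StrictAntiOn g (Icc a (a + 1))) (hper : ∀ x, g (x + 1) = g x - 1) : StrictAnti g := by
  have hshift : ∀ (x : ℝ) (n : ℤ), g x = g (x - n) - n := fun x n => by
    have := map_add_int_of_map_add_one (g := g) (k := -1) (fun x => by rw [hper]; ring) (x - n) n
    rw [sub_add_cancel] at this
    linarith
  have hfloor : ∀ x : ℝ, x - ⌊x - a⌋ ∈ Ico a (a + 1) := fun x =>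
    ⟨by linarith [Int.floor_le (x - a)], by linarith [Int.lt_floor_add_one (x - a)]⟩
  intro x y hxy
  have hx := hfloor x
  have hy := hfloor y
  rw [hshift x ⌊x - a⌋, hshift y ⌊y - a⌋]
  rcases (Int.floor_mono (sub_le_sub_right hxy.le a)).eq_or_lt with hnm | hnm
  · rw [← hnm]
    have := h (Ico_subset_Icc_self hx) (Ico_subset_Icc_self (hnm ▸ hy)) (by linarith)
    linarith
  · have hnm' : (⌊x - a⌋ : ℝ) + 1 ≤ ⌊y - a⌋ := by exact_mod_cast hnm
    have h₁ := h.antitoneOn (left_mem_Icc.2 (by linarith)) (Ico_subset_Icc_self hy) hy.1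
    have h₂ := h (Ico_subset_Icc_self hx) (right_mem_Icc.2 (by linarith)) hx.2
    rw [hper] at h₂
    linarith

theorem Antitone.surjective_sub_self {H : ℝ → ℝ} (hH : Antitone H) (hc : Continuous H) :
    Surjective fun x => H x - x := by
  simp_rw [sub_eq_add_neg]
  refine (hc.add continuous_neg).surjective' ?_ ?_
  · exact tendsto_atTop_add_left_of_le' _ (H 0)
      (eventually_le_atBot 0 |>.mono fun x hx => hH hx) tendsto_neg_atBot_atTop
  · exact tendsto_atBot_add_left_of_ge' _ (H 0)
      (eventually_ge_atTop 0 |>.mono fun x hx => hH hx) tendsto_neg_atTop_atBot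

theorem Equiv.commute_comp_self_of_reverses {α : Type*} (F H : α ≃ α)
    (hrev : ∀ x, F (H (F x)) = H x) : Function.Commute F (H ∘ H) := fun x => by
  have h₁ : H (F x) = F.symm (H x) := by rw [← hrev x, F.symm_apply_apply]
  have h₂ : H (F.symm (H x)) = F (H (H x)) := by simpa using (hrev (F.symm (H x))).symm
  simp only [comp_apply, h₁, h₂]

theorem Equiv.symm_reverses {α : Type*} (F H : α ≃ α) (hrev : ∀ x, F (H (F x)) = H x)
    (x : α) : F (H.symm (F x)) = H.symm x := by
  rw [Equiv.eq_symm_apply]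
  exact F.injective (by rw [hrev, Equiv.apply_symm_apply])

def bands (a b : ℝ) : Set ℝ := ⋃ n : ℤ, Icc (a + n) (b + n)

def bandEnds (a b : ℝ) : Set ℝ := range (fun n : ℤ => a + n) ∪ range (fun n : ℤ => b + n)

section Bands

variable {a b a' b' x y : ℝ}

theorem mem_bands : x ∈ bands a b ↔ ∃ n : ℤ, a + n ≤ x ∧ x ≤ b + n := by
  simp [bands]

theorem add_one_mem_bands_iff : x + 1 ∈ bands a b ↔ x ∈ bands a b := by
  simp only [mem_bands]
  constructor
  · rintro ⟨n, h₁, h₂⟩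
    exact ⟨n - 1, by push_cast; linarith, by push_cast; linarith⟩
  · rintro ⟨n, h₁, h₂⟩
    exact ⟨n + 1, by push_cast; linarith, by push_cast; linarith⟩

theorem mem_bands_sub_one_of_notMem (hx : x ∉ bands a b) : x ∈ bands (b - 1) a := by
  have h₁ : a + ⌊x - a⌋ ≤ x := by linarith [Int.floor_le (x - a)]
  have h₂ : x < a + ⌊x - a⌋ + 1 := by linarith [Int.lt_floor_add_one (x - a)]
  have h₃ : b + ⌊x - a⌋ < x := not_le.1 fun h => hx (mem_bands.2 ⟨_, h₁, h⟩)
  exact mem_bands.2 ⟨⌊x - a⌋ + 1, by push_cast; linarith, by push_cast; linarith⟩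

theorem bands_inter_bands_sub_one_subset : bands a b ∩ bands (b - 1) a ⊆ bandEnds a b := by
  rintro x ⟨hx, hx'⟩
  obtain ⟨n, hn₁, hn₂⟩ := mem_bands.1 hx
  obtain ⟨m, hm₁, hm₂⟩ := mem_bands.1 hx'
  rcases le_or_gt m n with hmn | hmn
  · have : (m : ℝ) ≤ n := by exact_mod_cast hmn
    exact Or.inl ⟨n, le_antisymm hn₁ (by linarith)⟩
  · have : (n : ℝ) + 1 ≤ m := by exact_mod_cast hmn
    exact Or.inr ⟨n, le_antisymm (by linarith) hn₂⟩

theorem exists_bandEnds_mem_uIcc (hx : x ∈ bands a b) (hy : y ∉ bands a b) :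
    ∃ c ∈ bandEnds a b, c ∈ uIcc x y := by
  obtain ⟨n, hn₁, hn₂⟩ := mem_bands.1 hx
  rcases lt_or_ge y (a + n) with hya | hya
  · exact ⟨a + n, Or.inl ⟨n, rfl⟩, mem_uIcc.2 (Or.inr ⟨hya.le, hn₁⟩)⟩
  · have hyb : b + n < y := not_le.1 fun h => hy (mem_bands.2 ⟨n, hya, h⟩)
    exact ⟨b + n, Or.inr ⟨n, rfl⟩, mem_uIcc.2 (Or.inl ⟨hn₂, hyb.le⟩)⟩

theorem eventually_mem_bands_or_notMem (hx : x ∉ bandEnds a b) :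
    (∀ᶠ y in 𝓝 x, y ∈ bands a b) ∨ ∀ᶠ y in 𝓝 x, y ∉ bands a b := by
  set n := ⌊x - a⌋
  have h₁ : a + n < x := (by linarith [Int.floor_le (x - a)] : a + n ≤ x).lt_of_ne
    fun h => hx (Or.inl ⟨n, h⟩)
  have h₂ : x < a + n + 1 := by linarith [Int.lt_floor_add_one (x - a)]
  rcases lt_or_gt_of_ne fun h : x = b + n => hx (Or.inr ⟨n, h.symm⟩) with hb | hb
  · exact Or.inl (mem_of_superset (Ioo_mem_nhds h₁ hb) fun y hy =>
      mem_bands.2 ⟨n, hy.1.le, hy.2.le⟩)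
  · refine Or.inr (mem_of_superset (Ioo_mem_nhds hb h₂) fun y hy hyb => ?_)
    obtain ⟨m, hm₁, hm₂⟩ := mem_bands.1 hyb
    have hmn : m < n + 1 := by exact_mod_cast (by linarith [hy.2] : (m : ℝ) < n + 1)
    have hnm : n < m := by exact_mod_cast (by linarith [hy.1] : (n : ℝ) < m)
    omega

theorem isLocallyFiniteSet_bandEnds (a b : ℝ) : IsLocallyFiniteSet (bandEnds a b) :=
  (isLocallyFiniteSet_range_add_intCast a).union (isLocallyFiniteSet_range_add_intCast b)

theorem Antitone.mapsTo_bands {φ : ℝ → ℝ} (hφ : Antitone φ) (ha : ∀ n : ℤ, φ (a + n) = b' - n)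
    (hb : ∀ n : ℤ, φ (b + n) = a' - n) : MapsTo φ (bands a b) (bands a' b') := fun x hx => by
  obtain ⟨n, hn₁, hn₂⟩ := mem_bands.1 hx
  have h₁ := hφ hn₂
  have h₂ := hφ hn₁
  rw [hb] at h₁
  rw [ha] at h₂
  exact mem_bands.2 ⟨-n, by push_cast; linarith, by push_cast; linarith⟩

end Bands

open scoped Classical in
noncomputable def bandsPiecewise (H : ℝ ≃ₜ ℝ) (P Q : ℝ) : ℝ → ℝ := (bands P Q).piecewise H H.symm

section BandsPiecewise

variable {H : ℝ ≃ₜ ℝ} {P Q x : ℝ}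

theorem bandsPiecewise_of_mem (hx : x ∈ bands P Q) : bandsPiecewise H P Q x = H x := by
  classical
  exact piecewise_eq_of_mem _ _ _ hx

theorem bandsPiecewise_of_notMem (hx : x ∉ bands P Q) : bandsPiecewise H P Q x = H.symm x := by
  classical
  exact piecewise_eq_of_notMem _ _ _ hx

theorem bandsPiecewise_of_apply_apply (hx : H (H x) = x) : bandsPiecewise H P Q x = H x := by
  by_cases hxb : x ∈ bands P Q
  · exact bandsPiecewise_of_mem hxb
  · rw [bandsPiecewise_of_notMem hxb, H.symm_apply_eq, hx]

theorem symm_apply_add_intCast {c d : ℝ} (h : ∀ n : ℤ, H (c + n) = d - n) (n : ℤ) :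
    H.symm (d + n) = c - n := by
  rw [H.symm_apply_eq, sub_eq_add_neg, ← Int.cast_neg, h]
  push_cast; ring

theorem apply_apply_of_mem_bandEnds (hP : ∀ n : ℤ, H (P + n) = P - n)
    (hQ : ∀ n : ℤ, H (Q + n) = Q - 1 - n) (hx : x ∈ bandEnds P Q) : H (H x) = x := by
  rcases hx with ⟨n, rfl⟩ | ⟨n, rfl⟩
  · rw [hP, sub_eq_add_neg, ← Int.cast_neg, hP]
    push_cast; ring
  · rw [hQ, show Q - 1 - (n : ℝ) = Q + ((-1 - n : ℤ) : ℝ) by push_cast; ring, hQ]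
    push_cast; ring

theorem bandsPiecewise_of_mem_bands_sub_one (hP : ∀ n : ℤ, H (P + n) = P - n)
    (hQ : ∀ n : ℤ, H (Q + n) = Q - 1 - n) (hx : x ∈ bands (Q - 1) P) :
    bandsPiecewise H P Q x = H.symm x := by
  by_cases hxb : x ∈ bands P Q
  · have hHx := apply_apply_of_mem_bandEnds hP hQ (bands_inter_bands_sub_one_subset ⟨hxb, hx⟩)
    rw [bandsPiecewise_of_mem hxb, H.eq_symm_apply, hHx]
  · exact bandsPiecewise_of_notMem hxb

theorem bandsPiecewise_involutive (hH : StrictAnti H) (hP : ∀ n : ℤ, H (P + n) = P - n)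
    (hQ : ∀ n : ℤ, H (Q + n) = Q - 1 - n) : Involutive (bandsPiecewise H P Q) := fun x => by
  by_cases hx : x ∈ bands P Q
  · have hHx : H x ∈ bands (Q - 1) P := hH.antitone.mapsTo_bands hP hQ hx
    rw [bandsPiecewise_of_mem hx, bandsPiecewise_of_mem_bands_sub_one hP hQ hHx,
      H.symm_apply_apply]
  · have hQ' : ∀ n : ℤ, H.symm (Q - 1 + n) = Q - n := fun n => by
      rw [symm_apply_add_intCast hQ]
    have hHx : H.symm x ∈ bands P Q :=
      (StrictAnti.equiv_symm (e := H.toEquiv) hH).antitone.mapsTo_bands hQ'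
        (symm_apply_add_intCast hP) (mem_bands_sub_one_of_notMem hx)
    rw [bandsPiecewise_of_notMem hx, bandsPiecewise_of_mem hHx, H.apply_symm_apply]

theorem bandsPiecewise_add_one (hper : ∀ x, H (x + 1) = H x - 1) (x : ℝ) :
    bandsPiecewise H P Q (x + 1) = bandsPiecewise H P Q x - 1 := by
  by_cases hx : x ∈ bands P Q
  · rw [bandsPiecewise_of_mem hx, bandsPiecewise_of_mem (add_one_mem_bands_iff.2 hx), hper]
  · rw [bandsPiecewise_of_notMem hx, bandsPiecewise_of_notMem (add_one_mem_bands_iff.not.2 hx),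
      H.symm_apply_eq]
    have := hper (H.symm x - 1)
    rw [sub_add_cancel, H.apply_symm_apply] at this
    linarith

theorem bandsPiecewise_strictAnti (hH : StrictAnti H) (hP : ∀ n : ℤ, H (P + n) = P - n)
    (hQ : ∀ n : ℤ, H (Q + n) = Q - 1 - n) (hper : ∀ x, H (x + 1) = H x - 1) (hPQ : P ≤ Q)
    (hQP : Q ≤ P + 1) : StrictAnti (bandsPiecewise H P Q) := by
  have hA : ∀ z ∈ Icc P Q, z ∈ bands P Q := fun z hz =>
    mem_bands.2 ⟨0, by simpa using hz.1, by simpa using hz.2⟩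
  have hC : ∀ z ∈ Icc Q (P + 1), z ∈ bands (Q - 1) P := fun z hz =>
    mem_bands.2 ⟨1, by push_cast; linarith [hz.1], by push_cast; linarith [hz.2]⟩
  have h₁ : StrictAntiOn (bandsPiecewise H P Q) (Icc P Q) := fun x hx y hy hxy => by
    rw [bandsPiecewise_of_mem (hA x hx), bandsPiecewise_of_mem (hA y hy)]
    exact hH hxy
  have h₂ : StrictAntiOn (bandsPiecewise H P Q) (Icc Q (P + 1)) := fun x hx y hy hxy => by
    rw [bandsPiecewise_of_mem_bands_sub_one hP hQ (hC x hx),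
      bandsPiecewise_of_mem_bands_sub_one hP hQ (hC y hy)]
    exact StrictAnti.equiv_symm (e := H.toEquiv) hH hxy
  have h := h₁.union h₂ (isGreatest_Icc hPQ) (isLeast_Icc hQP)
  rw [Icc_union_Icc_eq_Icc hPQ hQP] at h
  exact h.strictAnti_of_map_add_one (bandsPiecewise_add_one hper)

theorem isPLFun_bandsPiecewise (hH : IsPLFun H) : IsPLFun (bandsPiecewise H P Q) :=
  hH.of_eventuallyEq_or hH.symm (isLocallyFiniteSet_bandEnds P Q) fun _ hx =>
    (eventually_mem_bands_or_notMem hx).imp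
      (fun h => h.mono fun _ => bandsPiecewise_of_mem)
      (fun h => h.mono fun _ => bandsPiecewise_of_notMem)

theorem bandsPiecewise_reverses (F : ℝ ≃o ℝ) (hfix : ∀ y, ∃ s, y ≤ s ∧ F s = s)
    (hHPL : IsPLFun H) (hrev : ∀ x, F (H (F x)) = H x) (hP : ∀ n : ℤ, H (P + n) = P - n)
    (hQ : ∀ n : ℤ, H (Q + n) = Q - 1 - n) (x : ℝ) :
    F (bandsPiecewise H P Q (F x)) = bandsPiecewise H P Q x := by
  have hFG : Function.Commute F (H ∘ H) :=
    Equiv.commute_comp_self_of_reverses F.toEquiv H.toEquiv hrev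
  by_cases hxy : x ∈ bands P Q ↔ F x ∈ bands P Q
  · by_cases hx : x ∈ bands P Q
    · rw [bandsPiecewise_of_mem (hxy.1 hx), bandsPiecewise_of_mem hx, hrev]
    · rw [bandsPiecewise_of_notMem (hxy.not.1 hx), bandsPiecewise_of_notMem hx]
      exact Equiv.symm_reverses F.toEquiv H.toEquiv hrev x
  -- `x` and `F x` lie on opposite sides of a band end, which `H ∘ H` fixes
  obtain ⟨c, hc, hcx⟩ : ∃ c ∈ bandEnds P Q, c ∈ uIcc x (F x) := by
    by_cases hx : x ∈ bands P Q
    · exact exists_bandEnds_mem_uIcc hx fun hFx => hxy (iff_of_true hx hFx)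
    · have hFx : F x ∈ bands P Q := by_contra fun hFx => hxy (iff_of_false hx hFx)
      rw [uIcc_comm]
      exact exists_bandEnds_mem_uIcc hFx hx
  have hGx : H (H x) = x := apply_eq_self_of_mem_uIcc (G := H ∘ H) F hfix
    ((hHPL.comp hHPL H.continuous H.injective).exists_affine_Ioo_left) hFG hcx
    (apply_apply_of_mem_bandEnds hP hQ hc)
  have hGFx : H (H (F x)) = F x := by
    have := hFG.eq x
    simp only [comp_apply, hGx] at this
    exact this.symm
  rw [bandsPiecewise_of_apply_apply hGFx, bandsPiecewise_of_apply_apply hGx, hrev]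

end BandsPiecewise

theorem exists_strictAnti_involutive_reversing (F : ℝ ≃o ℝ) (hfix : ∀ y, ∃ s, y ≤ s ∧ F s = s)
    {H : ℝ ≃ₜ ℝ} (hH : StrictAnti H) (hHPL : IsPLFun H) (hper : ∀ x, H (x + 1) = H x - 1)
    (hrev : ∀ x, F (H (F x)) = H x) :
    ∃ T : ℝ → ℝ, StrictAnti T ∧ IsPLFun T ∧ Involutive T ∧ (∀ x, T (x + 1) = T x - 1) ∧
      ∀ x, F (T (F x)) = T x := by
  obtain ⟨P, hP₀⟩ := hH.antitone.surjective_sub_self H.continuous 0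
  obtain ⟨Q, hQ₀⟩ := hH.antitone.surjective_sub_self H.continuous (-1)
  simp only at hP₀ hQ₀
  have hshift : ∀ (x : ℝ) (n : ℤ), H (x + n) = H x - n := fun x n => by
    rw [map_add_int_of_map_add_one (g := H) (k := -1) (fun x => by rw [hper]; ring)]
    ring
  have hP : ∀ n : ℤ, H (P + n) = P - n := fun n => by rw [hshift]; linarith
  have hQ : ∀ n : ℤ, H (Q + n) = Q - 1 - n := fun n => by rw [hshift]; linarith
  have hφ : StrictAnti fun x => H x - x := fun a b hab => by
    have := hH hab
    simp only
    linarith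
  have hPQ : P ≤ Q := hφ.le_iff_ge.1 (by simp only [hP₀, hQ₀]; norm_num)
  have hQP : Q ≤ P + 1 := hφ.le_iff_ge.1 (by simp only [hper, hQ₀]; linarith)
  exact ⟨bandsPiecewise H P Q, bandsPiecewise_strictAnti hH hP hQ hper hPQ hQP,
    isPLFun_bandsPiecewise hHPL, bandsPiecewise_involutive hH hP hQ, bandsPiecewise_add_one hper,
    bandsPiecewise_reverses F hfix hHPL hrev hP hQ⟩

/-- Let `f ∈ PL⁺(S¹)` with rotation number `0` (equivalently, `f` has a fixed
point) be reversed by some `h ∈ PL⁻(S¹)` (`h f h⁻¹ = f⁻¹`, equivalently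
`f ∘ h ∘ f = h`).  Then `f` is strongly reversible in `PL(S¹)` by an
orientation-reversing involution. -/
theorem rho_zero_reversed_by_PLminus_strongly_reversible (f h : Circle ≃ₜ Circle)
    (hf : PLplus f) (hfix : ∃ z : Circle, f z = z)
    (hh : PLminus h) (hrev : ∀ z : Circle, f (h (f z)) = h z) :
    ∃ τ : Circle ≃ₜ Circle, PLminus τ ∧ (∀ z : Circle, τ (τ z) = z) ∧
      ∀ z : Circle, f (τ (f z)) = τ z := by
  obtain ⟨F, hF, x₀, hx₀⟩ := hf.exists_orderIso_isLift hfix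
  obtain ⟨H, hHa, hHPL, hH⟩ := hh.exists_homeomorph_isLift
  have hFfix : ∀ y, ∃ s, y ≤ s ∧ F s = s := fun y =>
    ⟨x₀ + ⌈y - x₀⌉, by linarith [Int.le_ceil (y - x₀)], by rw [hF.map_add_int, hx₀, mul_one]⟩
  have hrevH := hF.reverses_of_reverses F.strictMono F.continuous hH H.continuous hrev hx₀
  obtain ⟨T, hTa, hTPL, hTinv, hTper, hTrev⟩ := exists_strictAnti_involutive_reversing F hFfix
    hHa hHPL (fun x => by rw [hH.2]; ring) hrevH
  obtain ⟨τ, hτinv, hτ⟩ := exists_homeomorph_involutive_isLift hTa hTinv hTper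
  refine ⟨τ, ⟨T, hTa, hTPL, hτ⟩, hτinv, fun z => ?_⟩
  obtain ⟨x, rfl⟩ := Circle.surjective_exp_two_pi_mul z
  simp only [hτ.1, hF.1, hTrev]
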